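/- Let N > 3 and m be integers with 1 < m < N−1, and let L > 0. The following are equivalent: (i) there exist λ ∈ ℂ and functions φ₁, …, φ_N : ℝ → ℂ, not all identically zero on [0,L], each satisfying the KdV spectral ODE with parameter λ on [0,L], with the boundary conditions φ_j(0) = φ₁(0) for all j, Σ_{j=1}^N φ_j''(0) = 0, φ_j(L) = 0 and φ_j'(0) = 0 for all j, φ_j'(L) = 0 for j = 1,…,m, and φ_j''(L) = 0 for j = m+1,…,N; (ii) L belongs to 𝒩 ∪ 𝒩*. -/

import Mathlib

/-!
Let `v` be the common value of the `φⱼ` at the vertex. If `χ` solves the spectral equation, then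
`x ↦ χ (L - x)` solves its adjoint, so by the Lagrange identity a bilinear form in the jets of a
solution `ψ` at `x` and of `χ` at `L - x` is constant. For an edge `ψ` with `ψ'(L) = 0` and an
edge `χ` with `χ''(L) = 0`, comparing `x = 0` with `x = L` gives `ψ''(L) v = 0`, and `ψ''(L) = 0`
would make `ψ` vanish identically; hence `v = 0`. So a nonzero edge function solves Rosier's
problem `φ(0) = φ'(0) = φ(L) = φ'(L) = 0` or the Glass–Guerrero problem
`φ(0) = φ'(0) = φ(L) = φ''(L) = 0`; conversely an eigenfunction of either, placed as `ψ` and `-ψ`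
on two edges of the same kind, is one of the network.

The solutions with `φ(0) = φ'(0) = 0` form a line. When the roots `r₁, r₂, r₃` of `r³ + r + λ`
are distinct it is spanned by `∑ (r₂ - r₃) e^{r₁x}` (cyclically), and the two conditions at `L`
say that the `e^{rᵢL}` are all equal (this gives `𝒩`) or proportional to the `rᵢ` (this gives
`𝒩*`, with `a = -r₁L`, `b = -r₂L`). For a double root `μ`, `3μL` is purely imaginary and nonzero,
so `(3μL - 1) e^{3μL} ≠ -1` and no nonzero solution of the line vanishes at `L`.
-/

/-- A function `φ : ℝ → ℂ` satisfies the KdV spectral ODE with parameter `lam` on `[0, L]`: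
it is three times continuously differentiable and `lam·φ + φ' + φ''' = 0` on `[0, L]`. -/
def KdVSpectralODE (lam : ℂ) (L : ℝ) (φ : ℝ → ℂ) : Prop :=
  ContDiff ℝ 3 φ ∧
    ∀ x ∈ Set.Icc (0 : ℝ) L, lam * φ x + deriv φ x + iteratedDeriv 3 φ x = 0

/-- The critical set 𝒩 of Rosier. -/
def criticalN : Set ℝ :=
  {L : ℝ | ∃ k l : ℕ, 0 < k ∧ 0 < l ∧
    L = (2 * Real.pi / Real.sqrt 3) * Real.sqrt ((k : ℝ) ^ 2 + (k : ℝ) * l + (l : ℝ) ^ 2)}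

/-- The critical set 𝒩* of Glass and Guerrero. -/
def criticalNStar : Set ℝ :=
  {L : ℝ | 0 < L ∧ ∃ a b : ℂ,
    a * Complex.exp a = b * Complex.exp b ∧
    b * Complex.exp b = -(a + b) * Complex.exp (-(a + b)) ∧
    (L : ℂ) ^ 2 = -(a ^ 2 + a * b + b ^ 2)}

open Set Complex

noncomputable section

/-! ### Jets and uniqueness -/

def jet (f : ℝ → ℂ) (x : ℝ) : ℂ × ℂ × ℂ := (f x, deriv f x, iteratedDeriv 2 f x)

/-- The spectral equation as the first-order system
`(φ, φ', φ'')' = kdvCompanion λ (φ, φ', φ'')`. -/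
def kdvCompanion (lam : ℂ) : (ℂ × ℂ × ℂ) →L[ℂ] ℂ × ℂ × ℂ :=
  LinearMap.toContinuousLinearMap
    { toFun := fun p => (p.2.1, p.2.2, -(lam * p.1) - p.2.1)
      map_add' := fun p q => by ext <;> simp; ring
      map_smul' := fun c p => by ext <;> simp; ring }

lemma kdvCompanion_apply (lam a b c : ℂ) :
    kdvCompanion lam (a, b, c) = (b, c, -(lam * a) - b) := rfl

lemma hasDerivAt_iteratedDeriv {𝕜 F : Type*} [NontriviallyNormedField 𝕜] [NormedAddCommGroup F]
    [NormedSpace 𝕜 F] {f : 𝕜 → F} {n : WithTop ℕ∞} (hf : ContDiff 𝕜 n f) {m : ℕ} (hm : m < n)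
    (x : 𝕜) : HasDerivAt (iteratedDeriv m f) (iteratedDeriv (m + 1) f x) x := by
  rw [iteratedDeriv_succ]
  exact (hf.differentiable_iteratedDeriv m hm x).hasDerivAt

namespace KdVSpectralODE

variable {lam : ℂ} {L : ℝ} {f g : ℝ → ℂ}

lemma hasDerivAt_jet (hf : KdVSpectralODE lam L f) {x : ℝ} (hx : x ∈ Icc 0 L) :
    HasDerivAt (jet f) (kdvCompanion lam (jet f x)) x := by
  have h₀ := hasDerivAt_iteratedDeriv hf.1 (m := 0) (by norm_num) x
  have h₁ := hasDerivAt_iteratedDeriv hf.1 (m := 1) (by norm_num) x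
  have h₂ := hasDerivAt_iteratedDeriv hf.1 (m := 2) (by norm_num) x
  rw [iteratedDeriv_zero, zero_add, iteratedDeriv_one] at h₀
  rw [iteratedDeriv_one] at h₁
  refine (h₀.prodMk (h₁.prodMk h₂)).congr_deriv ?_
  simp only [jet, kdvCompanion_apply, Prod.mk.injEq, true_and]
  linear_combination hf.2 x hx

lemma eqOn_jet (hf : KdVSpectralODE lam L f) (hg : KdVSpectralODE lam L g) {t : ℝ}
    (ht : t ∈ Icc 0 L) (h : jet f t = jet g t) : EqOn (jet f) (jet g) (Icc 0 L) := by
  have hv : LipschitzOnWith ‖kdvCompanion lam‖₊ (kdvCompanion lam) univ :=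
    (kdvCompanion lam).lipschitz.lipschitzOnWith
  have hcont {u : ℝ → ℂ} (hu : KdVSpectralODE lam L u) : ContinuousOn (jet u) (Icc 0 L) :=
    fun x hx => (hu.hasDerivAt_jet hx).continuousAt.continuousWithinAt
  have hderiv {u : ℝ → ℂ} (hu : KdVSpectralODE lam L u) {s : Set ℝ} (hs : s ⊆ Icc 0 L)
      (I : ℝ → Set ℝ) : ∀ x ∈ s, HasDerivWithinAt (jet u) (kdvCompanion lam (jet u x)) (I x) x :=
    fun x hx => (hu.hasDerivAt_jet (hs hx)).hasDerivWithinAt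
  rw [← Icc_union_Icc_eq_Icc ht.1 ht.2]
  refine EqOn.union ?_ ?_
  · have hs : Ioc 0 t ⊆ Icc 0 L := fun x hx => ⟨hx.1.le, hx.2.trans ht.2⟩
    exact ODE_solution_unique_of_mem_Icc_left (fun _ _ => hv)
      ((hcont hf).mono (Icc_subset_Icc_right ht.2)) (hderiv hf hs _) (fun _ _ => trivial)
      ((hcont hg).mono (Icc_subset_Icc_right ht.2)) (hderiv hg hs _) (fun _ _ => trivial) h
  · have hs : Ico t L ⊆ Icc 0 L := fun x hx => ⟨ht.1.trans hx.1, hx.2.le⟩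
    exact ODE_solution_unique_of_mem_Icc_right (fun _ _ => hv)
      ((hcont hf).mono (Icc_subset_Icc_left ht.1)) (hderiv hf hs _) (fun _ _ => trivial)
      ((hcont hg).mono (Icc_subset_Icc_left ht.1)) (hderiv hg hs _) (fun _ _ => trivial) h

lemma const_mul (hf : KdVSpectralODE lam L f) (c : ℂ) :
    KdVSpectralODE lam L (fun x => c * f x) := by
  refine ⟨contDiff_const.mul hf.1, fun x hx => ?_⟩
  rw [deriv_const_mul_field, iteratedDeriv_const_mul_field]
  linear_combination c * hf.2 x hx

lemma jet_const_mul (c : ℂ) (x : ℝ) : jet (fun x => c * f x) x = c • jet f x := by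
  simp [jet, deriv_const_mul_field]

lemma zero : KdVSpectralODE lam L 0 :=
  ⟨contDiff_const, fun x _ => by simp⟩

lemma exists_jet_eq_smul {φ Φ : ℝ → ℂ} (hL : 0 ≤ L) (hφ : KdVSpectralODE lam L φ)
    (hΦ : KdVSpectralODE lam L Φ) {d : ℂ} (hΦ₀ : jet Φ 0 = (0, 0, d)) (hd : d ≠ 0)
    (h₀ : φ 0 = 0) (h₁ : deriv φ 0 = 0) : ∃ c : ℂ, ∀ x ∈ Icc 0 L, jet φ x = c • jet Φ x := by
  refine ⟨iteratedDeriv 2 φ 0 / d, fun x hx => ?_⟩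
  rw [← jet_const_mul]
  refine hφ.eqOn_jet (hΦ.const_mul _) (left_mem_Icc.2 hL) ?_ hx
  rw [jet_const_mul, hΦ₀, jet, h₀, h₁]
  simp [hd]

end KdVSpectralODE

/-! ### Explicit solutions -/

section DerivativeChain

variable {F : Type*} [NormedAddCommGroup F] [NormedSpace ℝ F] {f : ℕ → ℝ → F}

lemma iteratedDeriv_eq_of_hasDerivAt (hf : ∀ k x, HasDerivAt (f k) (f (k + 1) x) x) (n : ℕ) :
    iteratedDeriv n (f 0) = f n := by
  induction n with
  | zero => rfl
  | succ n ih => rw [iteratedDeriv_succ, ih]; exact funext fun x => (hf n x).deriv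

lemma contDiff_of_hasDerivAt (hf : ∀ k x, HasDerivAt (f k) (f (k + 1) x) x) (n : ℕ∞) :
    ContDiff ℝ n (f 0) :=
  contDiff_of_differentiable_iteratedDeriv fun m _ => by
    rw [iteratedDeriv_eq_of_hasDerivAt hf]
    exact fun x => (hf m x).differentiableAt

lemma eqOn_zero_of_hasDerivAt {a b : ℝ} (hab : a < b) {g g' : ℝ → F}
    (hg : ∀ x, HasDerivAt g (g' x) x) (h : EqOn g 0 (Icc a b)) : EqOn g' 0 (Icc a b) :=
  fun x hx => (uniqueDiffOn_Icc hab x hx).eq_deriv _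
    ((hg x).hasDerivWithinAt.congr (fun _ hy => (h hy).symm) (h hx).symm)
    (hasDerivWithinAt_const x _ 0)

end DerivativeChain

lemma kdvSpectralODE_of_hasDerivAt {lam : ℂ} {L : ℝ} {f : ℕ → ℝ → ℂ}
    (hf : ∀ k x, HasDerivAt (f k) (f (k + 1) x) x)
    (hode : ∀ x ∈ Icc 0 L, lam * f 0 x + f 1 x + f 3 x = 0) : KdVSpectralODE lam L (f 0) := by
  refine ⟨contDiff_of_hasDerivAt hf 3, fun x hx => ?_⟩
  rw [← iteratedDeriv_one, iteratedDeriv_eq_of_hasDerivAt hf, iteratedDeriv_eq_of_hasDerivAt hf]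
  exact hode x hx

lemma jet_of_hasDerivAt {f : ℕ → ℝ → ℂ} (hf : ∀ k x, HasDerivAt (f k) (f (k + 1) x) x)
    (x : ℝ) : jet (f 0) x = (f 0 x, f 1 x, f 2 x) := by
  rw [jet, ← iteratedDeriv_one, iteratedDeriv_eq_of_hasDerivAt hf,
    iteratedDeriv_eq_of_hasDerivAt hf]

lemma hasDerivAt_cexp_mul (r : ℂ) (x : ℝ) :
    HasDerivAt (fun y : ℝ => cexp (r * y)) (r * cexp (r * x)) x := by
  simpa [mul_comm] using ((hasDerivAt_id (x : ℂ)).const_mul r).cexp.comp_ofReal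

/-- The `k`-th derivative of a solution with jet `(0, 0, *)` at `0`, built on three distinct
characteristic roots. -/
def distinctRootSol (r₁ r₂ r₃ : ℂ) (k : ℕ) (x : ℝ) : ℂ :=
  (r₂ - r₃) * r₁ ^ k * cexp (r₁ * x) + (r₃ - r₁) * r₂ ^ k * cexp (r₂ * x) +
    (r₁ - r₂) * r₃ ^ k * cexp (r₃ * x)

lemma hasDerivAt_distinctRootSol (r₁ r₂ r₃ : ℂ) (k : ℕ) (x : ℝ) :
    HasDerivAt (distinctRootSol r₁ r₂ r₃ k) (distinctRootSol r₁ r₂ r₃ (k + 1) x) x := by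
  refine ((((hasDerivAt_cexp_mul r₁ x).const_mul ((r₂ - r₃) * r₁ ^ k)).add
    ((hasDerivAt_cexp_mul r₂ x).const_mul ((r₃ - r₁) * r₂ ^ k))).add
    ((hasDerivAt_cexp_mul r₃ x).const_mul ((r₁ - r₂) * r₃ ^ k))).congr_deriv ?_
  simp only [distinctRootSol]
  ring

lemma jet_distinctRootSol_zero (r₁ r₂ r₃ : ℂ) :
    jet (distinctRootSol r₁ r₂ r₃ 0) 0 = (0, 0, (r₁ - r₂) * (r₁ - r₃) * (r₂ - r₃)) := by
  simp only [jet_of_hasDerivAt (hasDerivAt_distinctRootSol r₁ r₂ r₃), distinctRootSol,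
    ofReal_zero, mul_zero, exp_zero, Prod.mk.injEq]
  refine ⟨?_, ?_, ?_⟩ <;> ring

/-- The `k`-th derivative of the solution `(3μx - 1) e^{μx} + e^{-2μx}`, for a double
characteristic root `μ`. -/
def doubleRootSol (μ : ℂ) (k : ℕ) (x : ℝ) : ℂ :=
  ((3 * k - 1) * μ ^ k + 3 * μ ^ (k + 1) * x) * cexp (μ * x) + (-2 * μ) ^ k * cexp (-2 * μ * x)

lemma hasDerivAt_doubleRootSol (μ : ℂ) (k : ℕ) (x : ℝ) :
    HasDerivAt (doubleRootSol μ k) (doubleRootSol μ (k + 1) x) x := by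
  have hlin : HasDerivAt (fun y : ℝ => (3 * k - 1) * μ ^ k + 3 * μ ^ (k + 1) * (y : ℂ))
      (3 * μ ^ (k + 1)) x := by
    simpa using ((hasDerivAt_id x).ofReal_comp.const_mul (3 * μ ^ (k + 1))).const_add
      ((3 * k - 1) * μ ^ k)
  refine ((hlin.mul (hasDerivAt_cexp_mul μ x)).add
    ((hasDerivAt_cexp_mul (-2 * μ) x).const_mul ((-2 * μ) ^ k))).congr_deriv ?_
  simp only [doubleRootSol]
  push_cast
  ring

lemma jet_doubleRootSol_zero (μ : ℂ) : jet (doubleRootSol μ 0) 0 = (0, 0, 9 * μ ^ 2) := by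
  simp only [jet_of_hasDerivAt (hasDerivAt_doubleRootSol μ), doubleRootSol, ofReal_zero,
    mul_zero, exp_zero, Prod.mk.injEq]
  push_cast
  refine ⟨?_, ?_, ?_⟩ <;> ring

lemma kdvSpectralODE_doubleRootSol {μ : ℂ} (hμ : 3 * μ ^ 2 + 1 = 0) (L : ℝ) :
    KdVSpectralODE (2 * μ ^ 3) L (doubleRootSol μ 0) :=
  kdvSpectralODE_of_hasDerivAt (hasDerivAt_doubleRootSol μ) fun x _ => by
    simp only [doubleRootSol]
    push_cast
    linear_combination (μ * (3 * μ * x + 2) * cexp (μ * x) - 2 * μ * cexp (-2 * μ * x)) * hμ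

lemma re_eq_zero_of_sq_eq_neg {z : ℂ} {s : ℝ} (hs : 0 ≤ s) (h : z ^ 2 = -(s : ℂ)) :
    z.re = 0 := by
  have hre := congrArg re h
  have him := congrArg im h
  simp only [sq, mul_re, mul_im, neg_re, neg_im, ofReal_re, ofReal_im] at hre him
  by_contra hz
  have : z.im = 0 := (mul_eq_zero.1 (show z.re * z.im = 0 by linarith)).resolve_left hz
  rw [this] at hre
  nlinarith [sq_pos_of_ne_zero hz]

lemma sub_one_mul_exp_ne_neg_one {z : ℂ} (hre : z.re = 0) (hz : z ≠ 0) :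
    (z - 1) * cexp z ≠ -1 := by
  intro h
  have hnorm := congrArg (‖·‖) h
  simp only [norm_mul, norm_exp, hre, Real.exp_zero, mul_one, norm_neg, norm_one] at hnorm
  have him : (z - 1).im ≠ 0 := fun him => hz (Complex.ext hre (by simpa using him))
  have := abs_re_lt_norm.2 him
  simp [hnorm, hre] at this

lemma doubleRootSol_ne_zero {μ : ℂ} (hμ : 3 * μ ^ 2 + 1 = 0) {L : ℝ} (hL : 0 < L) :
    doubleRootSol μ 0 L ≠ 0 := by
  have hμ0 : μ ≠ 0 := by rintro rfl; norm_num at hμ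
  have hre : (3 * μ * L).re = 0 :=
    re_eq_zero_of_sq_eq_neg (s := 3 * L ^ 2) (by positivity) (by
      push_cast; linear_combination 3 * (L : ℂ) ^ 2 * hμ)
  have hz : 3 * μ * L ≠ 0 :=
    mul_ne_zero (mul_ne_zero three_ne_zero hμ0) (ofReal_ne_zero.2 hL.ne')
  refine fun h => sub_one_mul_exp_ne_neg_one hre hz ?_
  have e₁ : cexp (μ * L) * cexp (2 * μ * L) = cexp (3 * μ * L) := by rw [← exp_add]; ring_nf
  have e₂ : cexp (-2 * μ * L) * cexp (2 * μ * L) = 1 := by rw [← exp_add]; ring_nf; simp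
  simp only [doubleRootSol] at h
  push_cast at h
  linear_combination cexp (2 * μ * L) * h - (3 * μ * L - 1) * e₁ - e₂

/-! ### Characteristic roots -/

/-- `r₁, r₂, r₃` are the three distinct roots of `r³ + r + λ`, for `λ = -r₁r₂r₃`. -/
structure IsCharTriple (r₁ r₂ r₃ : ℂ) : Prop where
  add_add : r₁ + r₂ + r₃ = 0
  mul_add_mul : r₁ * r₂ + r₁ * r₃ + r₂ * r₃ = 1
  ne₁₂ : r₁ ≠ r₂
  ne₁₃ : r₁ ≠ r₃
  ne₂₃ : r₂ ≠ r₃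

lemma exists_vieta_cubic (lam : ℂ) : ∃ r₁ r₂ r₃ : ℂ,
    r₁ + r₂ + r₃ = 0 ∧ r₁ * r₂ + r₁ * r₃ + r₂ * r₃ = 1 ∧ r₁ * r₂ * r₃ = -lam := by
  have hdeg : (Polynomial.X ^ 3 + Polynomial.X + Polynomial.C lam).degree = 3 := by
    compute_degree!
  obtain ⟨r, hr⟩ := Complex.exists_root (by rw [hdeg]; norm_num)
  simp only [Polynomial.IsRoot, Polynomial.eval_add, Polynomial.eval_pow, Polynomial.eval_X,
    Polynomial.eval_C] at hr
  obtain ⟨w, hw⟩ := IsAlgClosed.exists_pow_nat_eq (-3 * r ^ 2 - 4) two_pos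
  exact ⟨r, (-r + w) / 2, (-r - w) / 2, by ring, by linear_combination (-1 / 4 : ℂ) * hw,
    by linear_combination (-r / 4) * hw + hr⟩

lemma exists_isCharTriple_or_doubleRoot (lam : ℂ) :
    (∃ r₁ r₂ r₃ : ℂ, IsCharTriple r₁ r₂ r₃ ∧ lam = -(r₁ * r₂ * r₃)) ∨
      ∃ μ : ℂ, 3 * μ ^ 2 + 1 = 0 ∧ lam = 2 * μ ^ 3 := by
  obtain ⟨r₁, r₂, r₃, hs, hp, hq⟩ := exists_vieta_cubic lam
  by_cases h₁₂ : r₁ = r₂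
  · subst h₁₂
    obtain rfl : r₃ = -2 * r₁ := by linear_combination hs
    exact .inr ⟨r₁, by linear_combination -hp, by linear_combination hq⟩
  by_cases h₁₃ : r₁ = r₃
  · subst h₁₃
    obtain rfl : r₂ = -2 * r₁ := by linear_combination hs
    exact .inr ⟨r₁, by linear_combination -hp, by linear_combination hq⟩
  by_cases h₂₃ : r₂ = r₃
  · subst h₂₃
    obtain rfl : r₁ = -2 * r₂ := by linear_combination hs
    exact .inr ⟨r₂, by linear_combination -hp, by linear_combination hq⟩
  exact .inl ⟨r₁, r₂, r₃, ⟨hs, hp, h₁₂, h₁₃, h₂₃⟩, by linear_combination hq⟩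

namespace IsCharTriple

variable {r₁ r₂ r₃ : ℂ}

lemma kdvSpectralODE (h : IsCharTriple r₁ r₂ r₃) (L : ℝ) :
    KdVSpectralODE (-(r₁ * r₂ * r₃)) L (distinctRootSol r₁ r₂ r₃ 0) :=
  kdvSpectralODE_of_hasDerivAt (hasDerivAt_distinctRootSol r₁ r₂ r₃) fun x _ => by
    simp only [distinctRootSol]
    linear_combination (((r₂ - r₃) * r₁ ^ 2 * cexp (r₁ * x) +
      (r₃ - r₁) * r₂ ^ 2 * cexp (r₂ * x) + (r₁ - r₂) * r₃ ^ 2 * cexp (r₃ * x)) * h.add_add -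
      ((r₂ - r₃) * r₁ * cexp (r₁ * x) + (r₃ - r₁) * r₂ * cexp (r₂ * x) +
        (r₁ - r₂) * r₃ * cexp (r₃ * x)) * h.mul_add_mul)

lemma vandermonde_ne_zero (h : IsCharTriple r₁ r₂ r₃) :
    (r₁ - r₂) * (r₁ - r₃) * (r₂ - r₃) ≠ 0 :=
  mul_ne_zero (mul_ne_zero (sub_ne_zero.2 h.ne₁₂) (sub_ne_zero.2 h.ne₁₃)) (sub_ne_zero.2 h.ne₂₃)

lemma exists_distinctRootSol_ne_zero (h : IsCharTriple r₁ r₂ r₃) {L : ℝ} (hL : 0 < L) :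
    ∃ x ∈ Icc 0 L, distinctRootSol r₁ r₂ r₃ 0 x ≠ 0 := by
  by_contra! h₀
  have hd := hasDerivAt_distinctRootSol r₁ r₂ r₃
  have h₂ := eqOn_zero_of_hasDerivAt hL (hd 1) (eqOn_zero_of_hasDerivAt hL (hd 0) h₀)
    (left_mem_Icc.2 hL.le)
  have hjet := jet_distinctRootSol_zero r₁ r₂ r₃
  rw [jet_of_hasDerivAt hd, h₂] at hjet
  exact h.vandermonde_ne_zero (congrArg (·.2.2) hjet).symm

lemma distinctRootSol_eq_zero_iff_exp_eq (h : IsCharTriple r₁ r₂ r₃) (x : ℝ) :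
    distinctRootSol r₁ r₂ r₃ 0 x = 0 ∧ distinctRootSol r₁ r₂ r₃ 1 x = 0 ↔
      cexp (r₁ * x) = cexp (r₂ * x) ∧ cexp (r₂ * x) = cexp (r₃ * x) := by
  simp only [distinctRootSol, pow_zero, pow_one, mul_one]
  generalize cexp (r₁ * x) = E₁, cexp (r₂ * x) = E₂, cexp (r₃ * x) = E₃
  have h₁₂ := sub_ne_zero.2 h.ne₁₂
  have h₁₃ := sub_ne_zero.2 h.ne₁₃
  have h₂₃ := sub_ne_zero.2 h.ne₂₃
  constructor
  · rintro ⟨e₀, e₁⟩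
    refine ⟨?_, ?_⟩
    · refine sub_eq_zero.1 <| (mul_eq_zero.1 ?_).resolve_left (mul_ne_zero h₂₃ h₁₃)
      linear_combination e₁ - r₃ * e₀
    · refine sub_eq_zero.1 <| (mul_eq_zero.1 ?_).resolve_left (mul_ne_zero h₁₃ h₁₂)
      linear_combination e₁ - r₁ * e₀
  · rintro ⟨rfl, rfl⟩
    constructor <;> ring

lemma distinctRootSol_eq_zero_iff_exp_eq_mul (h : IsCharTriple r₁ r₂ r₃) (x : ℝ) :
    distinctRootSol r₁ r₂ r₃ 0 x = 0 ∧ distinctRootSol r₁ r₂ r₃ 2 x = 0 ↔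
      ∃ w : ℂ, cexp (r₁ * x) = w * r₁ ∧ cexp (r₂ * x) = w * r₂ ∧ cexp (r₃ * x) = w * r₃ := by
  simp only [distinctRootSol, pow_zero, mul_one]
  generalize cexp (r₁ * x) = E₁, cexp (r₂ * x) = E₂, cexp (r₃ * x) = E₃
  have h₁₂ := sub_ne_zero.2 h.ne₁₂
  have h₁₃ := sub_ne_zero.2 h.ne₁₃
  have h₂₃ := sub_ne_zero.2 h.ne₂₃
  constructor
  · rintro ⟨e₀, e₂⟩
    have c₁₂ : r₁ * E₂ = r₂ * E₁ := by
      refine sub_eq_zero.1 <| (mul_eq_zero.1 ?_).resolve_left (mul_ne_zero h₂₃ h₁₃)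
      linear_combination e₂ - r₃ ^ 2 * e₀ - (r₂ - r₃) * (r₁ - r₃) * (E₁ - E₂) * h.add_add
    have c₁₃ : r₁ * E₃ = r₃ * E₁ := by
      refine sub_eq_zero.1 <| (mul_eq_zero.1 ?_).resolve_left (mul_ne_zero h₂₃ h₁₂)
      linear_combination e₂ - r₂ ^ 2 * e₀ - (r₂ - r₃) * (r₁ - r₂) * (E₁ - E₃) * h.add_add
    have c₂₃ : r₂ * E₃ = r₃ * E₂ := by
      refine sub_eq_zero.1 <| (mul_eq_zero.1 ?_).resolve_left (mul_ne_zero h₁₃ h₁₂)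
      linear_combination e₂ - r₁ ^ 2 * e₀ - (r₁ - r₃) * (r₁ - r₂) * (E₂ - E₃) * h.add_add
    by_cases hr₁ : r₁ = 0
    · have hr₂ : r₂ ≠ 0 := hr₁ ▸ h.ne₁₂.symm
      refine ⟨E₂ / r₂, ?_, by field_simp, ?_⟩
      · subst hr₁; simpa [hr₂] using c₁₂.symm
      · field_simp; linear_combination c₂₃
    · refine ⟨E₁ / r₁, by field_simp, ?_, ?_⟩
      · field_simp; linear_combination c₁₂
      · field_simp; linear_combination c₁₃
  · rintro ⟨w, rfl, rfl, rfl⟩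
    constructor
    · ring
    · linear_combination w * (r₁ - r₂) * (r₁ - r₃) * (r₂ - r₃) * h.add_add

lemma sub_sq_add_sub_mul_sub_add_sub_sq (h : IsCharTriple r₁ r₂ r₃) :
    (r₁ - r₂) ^ 2 + (r₁ - r₂) * (r₂ - r₃) + (r₂ - r₃) ^ 2 = -3 := by
  linear_combination (r₁ + r₂ + r₃) * h.add_add - 3 * h.mul_add_mul

lemma sq_add_mul_add_sq (h : IsCharTriple r₁ r₂ r₃) : r₁ ^ 2 + r₁ * r₂ + r₂ ^ 2 = -1 := by
  linear_combination (r₁ + r₂) * h.add_add - h.mul_add_mul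

end IsCharTriple

lemma KdVSpectralODE.exists_isCharTriple {lam : ℂ} {L : ℝ} {φ : ℝ → ℂ} (hL : 0 < L)
    (hφ : KdVSpectralODE lam L φ) (h₀ : φ 0 = 0) (h₁ : deriv φ 0 = 0) (hL₀ : φ L = 0)
    (hne : ∃ x ∈ Icc 0 L, φ x ≠ 0) :
    ∃ r₁ r₂ r₃ : ℂ, IsCharTriple r₁ r₂ r₃ ∧
      ∃ c : ℂ, c ≠ 0 ∧ jet φ L = c • jet (distinctRootSol r₁ r₂ r₃ 0) L := by
  obtain ⟨x, hx, hφx⟩ := hne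
  have hL' : L ∈ Icc 0 L := right_mem_Icc.2 hL.le
  rcases exists_isCharTriple_or_doubleRoot lam with ⟨r₁, r₂, r₃, hr, rfl⟩ | ⟨μ, hμ, rfl⟩
  · obtain ⟨c, hc⟩ := hφ.exists_jet_eq_smul hL.le (hr.kdvSpectralODE L)
      (jet_distinctRootSol_zero r₁ r₂ r₃) hr.vandermonde_ne_zero h₀ h₁
    refine ⟨r₁, r₂, r₃, hr, c, ?_, hc L hL'⟩
    rintro rfl
    exact hφx (by simpa [jet] using congrArg Prod.fst (hc x hx))
  · have hμ0 : μ ≠ 0 := by rintro rfl; norm_num at hμ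
    obtain ⟨c, hc⟩ := hφ.exists_jet_eq_smul hL.le (kdvSpectralODE_doubleRootSol hμ L)
      (jet_doubleRootSol_zero μ) (mul_ne_zero (by norm_num) (pow_ne_zero 2 hμ0)) h₀ h₁
    have hcL := congrArg Prod.fst (hc L hL')
    rw [jet_of_hasDerivAt (hasDerivAt_doubleRootSol μ)] at hcL
    simp only [jet, hL₀, Prod.smul_mk, smul_eq_mul, zero_eq_mul] at hcL
    obtain rfl := hcL.resolve_right (doubleRootSol_ne_zero hμ hL)
    exact absurd (by simpa [jet] using congrArg Prod.fst (hc x hx)) hφx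

/-! ### The critical sets -/

lemma exists_pos_sq_add_mul_add_sq_eq {k l : ℤ} (hk : k ≠ 0) (hl : l ≠ 0) (hkl : k + l ≠ 0) :
    ∃ a b : ℤ, 0 < a ∧ 0 < b ∧ a ^ 2 + a * b + b ^ 2 = k ^ 2 + k * l + l ^ 2 := by
  rcases hk.lt_or_gt with hk | hk <;> rcases hl.lt_or_gt with hl | hl
  · exact ⟨-k, -l, by omega, by omega, by ring⟩
  · rcases hkl.lt_or_gt with hs | hs
    · exact ⟨-k - l, l, by omega, by omega, by ring⟩
    · exact ⟨k + l, -k, by omega, by omega, by ring⟩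
  · rcases hkl.lt_or_gt with hs | hs
    · exact ⟨-k - l, k, by omega, by omega, by ring⟩
    · exact ⟨k + l, -l, by omega, by omega, by ring⟩
  · exact ⟨k, l, hk, hl, rfl⟩

lemma eq_criticalN_formula_iff {L Q : ℝ} (hL : 0 ≤ L) (hQ : 0 ≤ Q) :
    L = 2 * Real.pi / √3 * √Q ↔ 3 * L ^ 2 = 4 * Real.pi ^ 2 * Q := by
  rw [← sq_eq_sq₀ hL (by positivity), mul_pow, div_pow, mul_pow, Real.sq_sqrt hQ,
    Real.sq_sqrt zero_le_three]
  constructor <;> intro h <;> linarith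

lemma exists_isCharTriple_of_mem_criticalN {L : ℝ} (hL : 0 < L) (hmem : L ∈ criticalN) :
    ∃ r₁ r₂ r₃ : ℂ, IsCharTriple r₁ r₂ r₃ ∧
      cexp (r₁ * L) = cexp (r₂ * L) ∧ cexp (r₂ * L) = cexp (r₃ * L) := by
  obtain ⟨k, l, hk, hl, hkl⟩ := hmem
  have hsq := (eq_criticalN_formula_iff hL.le (by positivity)).1 hkl
  have hsqC : 3 * (L : ℂ) ^ 2 = 4 * (Real.pi : ℂ) ^ 2 * (k ^ 2 + k * l + l ^ 2) := by
    exact_mod_cast hsq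
  have hL0 : (L : ℂ) ≠ 0 := ofReal_ne_zero.2 hL.ne'
  have hk0 : (k : ℂ) ≠ 0 := Nat.cast_ne_zero.2 hk.ne'
  have hl0 : (l : ℂ) ≠ 0 := Nat.cast_ne_zero.2 hl.ne'
  have hkl0 : (k : ℂ) + l ≠ 0 := by exact_mod_cast (Nat.add_pos_left hk l).ne'
  -- the roots with sum `0` and differences `r₁ - r₂ = 2πik/L`, `r₂ - r₃ = 2πil/L`
  set ω : ℂ := 2 * Real.pi * I / (3 * L)
  have hω : ω ≠ 0 := div_ne_zero (by simp [Real.pi_ne_zero]) (by simp [hL0])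
  refine ⟨ω * (2 * k + l), ω * (l - k), -(ω * (k + 2 * l)), ⟨by ring, ?_, ?_, ?_, ?_⟩, ?_, ?_⟩
  · simp only [ω]
    field_simp
    linear_combination (-12 * (Real.pi : ℂ) ^ 2 * (k ^ 2 + k * l + l ^ 2)) * I_sq - 3 * hsqC
  · intro h; apply mul_ne_zero (mul_ne_zero three_ne_zero hω) hk0; linear_combination h
  · intro h; apply mul_ne_zero (mul_ne_zero three_ne_zero hω) hkl0; linear_combination h
  · intro h; apply mul_ne_zero (mul_ne_zero three_ne_zero hω) hl0; linear_combination h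
  · refine exp_eq_exp_iff_exists_int.2 ⟨k, ?_⟩
    simp only [ω]; field_simp; push_cast; ring
  · refine exp_eq_exp_iff_exists_int.2 ⟨l, ?_⟩
    simp only [ω]; field_simp; push_cast; ring

lemma mem_criticalN_of_isCharTriple {L : ℝ} (hL : 0 < L) {r₁ r₂ r₃ : ℂ}
    (h : IsCharTriple r₁ r₂ r₃) (e₁₂ : cexp (r₁ * L) = cexp (r₂ * L))
    (e₂₃ : cexp (r₂ * L) = cexp (r₃ * L)) : L ∈ criticalN := by
  obtain ⟨k, hk⟩ := exp_eq_exp_iff_exists_int.1 e₁₂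
  obtain ⟨l, hl⟩ := exp_eq_exp_iff_exists_int.1 e₂₃
  have hL0 : (L : ℂ) ≠ 0 := ofReal_ne_zero.2 hL.ne'
  have cancel {r r' : ℂ} (hr : r ≠ r') {n : ℤ} (hn : r * L = r' * L + n * (2 * Real.pi * I)) :
      n ≠ 0 := by
    rintro rfl
    exact hr (mul_right_cancel₀ hL0 (by simpa using hn))
  have hk0 := cancel h.ne₁₂ hk
  have hl0 := cancel h.ne₂₃ hl
  have hkl0 := cancel h.ne₁₃ (n := k + l) (by push_cast; linear_combination hk + hl)
  have hsq : 3 * L ^ 2 = 4 * Real.pi ^ 2 * (k ^ 2 + k * l + l ^ 2) := by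
    have ha : (r₁ - r₂) * L = k * (2 * Real.pi * I) := by linear_combination hk
    have hb : (r₂ - r₃) * L = l * (2 * Real.pi * I) := by linear_combination hl
    have hC : (3 : ℂ) * L ^ 2 = 4 * Real.pi ^ 2 * (k ^ 2 + k * l + l ^ 2) := by
      linear_combination (L : ℂ) ^ 2 * h.sub_sq_add_sub_mul_sub_add_sub_sq -
        ((r₁ - r₂) * L + k * (2 * Real.pi * I) + (r₂ - r₃) * L) * ha -
        (k * (2 * Real.pi * I) + (r₂ - r₃) * L + l * (2 * Real.pi * I)) * hb -
        4 * Real.pi ^ 2 * (k ^ 2 + k * l + l ^ 2) * I_sq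
    exact_mod_cast hC
  obtain ⟨a, b, ha, hb, hab⟩ := exists_pos_sq_add_mul_add_sq_eq hk0 hl0 hkl0
  lift a to ℕ using ha.le
  lift b to ℕ using hb.le
  refine ⟨a, b, by omega, by omega, (eq_criticalN_formula_iff hL.le (by positivity)).2 ?_⟩
  have hQ : (a : ℝ) ^ 2 + a * b + b ^ 2 = k ^ 2 + k * l + l ^ 2 := by exact_mod_cast hab
  rw [hsq, hQ]

lemma mem_criticalNStar_of_isCharTriple {L : ℝ} (hL : 0 < L) {r₁ r₂ r₃ w : ℂ}
    (h : IsCharTriple r₁ r₂ r₃) (e₁ : cexp (r₁ * L) = w * r₁) (e₂ : cexp (r₂ * L) = w * r₂)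
    (e₃ : cexp (r₃ * L) = w * r₃) : L ∈ criticalNStar := by
  have key {r : ℂ} (hr : cexp (r * L) = w * r) : -(r * L) * cexp (-(r * L)) * w = -L := by
    have : cexp (-(r * L)) * cexp (r * L) = 1 := by rw [← exp_add]; simp
    linear_combination (L * cexp (-(r * L))) * hr - L * this
  have hw : w ≠ 0 := by rintro rfl; exact exp_ne_zero _ (e₁.trans (zero_mul r₁))
  refine ⟨hL, -(r₁ * L), -(r₂ * L), mul_right_cancel₀ hw ((key e₁).trans (key e₂).symm), ?_, ?_⟩
  · rw [show -(-(r₁ * L) + -(r₂ * L)) = -(r₃ * L) by linear_combination (L : ℂ) * h.add_add]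
    exact mul_right_cancel₀ hw ((key e₂).trans (key e₃).symm)
  · linear_combination (L : ℂ) ^ 2 * h.sq_add_mul_add_sq

lemma mul_exp_ne_neg_two_mul_exp {x : ℂ} {L : ℝ} (hL : 0 < L) (hx : (L : ℂ) ^ 2 = -3 * x ^ 2) :
    x * cexp x ≠ -2 * x * cexp (-2 * x) := by
  have hx0 : x ≠ 0 := by
    rintro rfl
    exact hL.ne' (by simpa using hx)
  intro h
  have h3 : cexp (3 * x) = -2 := by
    have e : cexp x * cexp (2 * x) = cexp (3 * x) := by rw [← exp_add]; ring_nf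
    have e' : cexp (-2 * x) * cexp (2 * x) = 1 := by rw [← exp_add]; ring_nf; simp
    refine mul_left_cancel₀ hx0 ?_
    linear_combination cexp (2 * x) * h - x * e - 2 * x * e'
  have hre : (3 * x).re = 0 :=
    re_eq_zero_of_sq_eq_neg (s := 3 * L ^ 2) (by positivity) (by
      push_cast; linear_combination 3 * hx)
  have := congrArg (‖·‖) h3
  norm_num [norm_exp, hre] at this

lemma exists_isCharTriple_of_mem_criticalNStar {L : ℝ} (hL : 0 < L) (hmem : L ∈ criticalNStar) :
    ∃ r₁ r₂ r₃ : ℂ, IsCharTriple r₁ r₂ r₃ ∧ ∃ w : ℂ,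
      cexp (r₁ * L) = w * r₁ ∧ cexp (r₂ * L) = w * r₂ ∧ cexp (r₃ * L) = w * r₃ := by
  obtain ⟨-, a, b, hab, hbc, hsq⟩ := hmem
  have hL0 : (L : ℂ) ≠ 0 := ofReal_ne_zero.2 hL.ne'
  have hK : a * cexp a ≠ 0 := by
    refine mul_ne_zero ?_ (exp_ne_zero a)
    rintro rfl
    obtain rfl : b = 0 := by simpa using hab.symm
    exact hL0 (by simpa using hsq)
  have key {x : ℂ} (hx : x * cexp x = a * cexp a) :
      cexp (-x / L * L) = -L / (a * cexp a) * (-x / L) := by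
    have hx0 : x ≠ 0 := by rintro rfl; exact hK (by simpa using hx.symm)
    rw [div_mul_cancel₀ _ hL0, ← hx]
    field_simp
    rw [← exp_add]
    simp
  refine ⟨-a / L, -b / L, (a + b) / L, ⟨by ring, ?_, ?_, ?_, ?_⟩, -L / (a * cexp a), key rfl,
    key hab.symm, by simpa using key (x := -(a + b)) (hbc.symm.trans hab.symm)⟩
  · field_simp
    linear_combination -hsq
  · rintro h
    obtain rfl : b = a := by field_simp at h; linear_combination h
    refine mul_exp_ne_neg_two_mul_exp (x := b) hL (by linear_combination hsq) ?_
    rw [show -2 * b = -(b + b) by ring]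
    exact hbc
  · rintro h
    obtain rfl : b = -2 * a := by field_simp at h; linear_combination -h
    exact mul_exp_ne_neg_two_mul_exp (x := a) hL (by linear_combination hsq) hab
  · rintro h
    obtain rfl : a = -2 * b := by field_simp at h; linear_combination -h
    exact mul_exp_ne_neg_two_mul_exp (x := b) hL (by linear_combination hsq) hab.symm

/-! ### Rosier's and Glass–Guerrero's problems -/

def HasRosierEigenfunction (L : ℝ) : Prop :=
  ∃ (lam : ℂ) (φ : ℝ → ℂ), KdVSpectralODE lam L φ ∧ φ 0 = 0 ∧ deriv φ 0 = 0 ∧ φ L = 0 ∧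
    deriv φ L = 0 ∧ ∃ x ∈ Icc 0 L, φ x ≠ 0

def HasGlassGuerreroEigenfunction (L : ℝ) : Prop :=
  ∃ (lam : ℂ) (φ : ℝ → ℂ), KdVSpectralODE lam L φ ∧ φ 0 = 0 ∧ deriv φ 0 = 0 ∧ φ L = 0 ∧
    iteratedDeriv 2 φ L = 0 ∧ ∃ x ∈ Icc 0 L, φ x ≠ 0

theorem hasRosierEigenfunction_iff {L : ℝ} (hL : 0 < L) :
    HasRosierEigenfunction L ↔ L ∈ criticalN := by
  constructor
  · rintro ⟨lam, φ, hφ, h₀, h₁, hL₀, hL₁, hne⟩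
    obtain ⟨r₁, r₂, r₃, hr, c, hc, hjet⟩ := hφ.exists_isCharTriple hL h₀ h₁ hL₀ hne
    rw [jet_of_hasDerivAt (hasDerivAt_distinctRootSol r₁ r₂ r₃), jet, hL₀, hL₁] at hjet
    simp only [Prod.smul_mk, smul_eq_mul, Prod.mk.injEq, zero_eq_mul, hc, false_or] at hjet
    obtain ⟨e₁₂, e₂₃⟩ := (hr.distinctRootSol_eq_zero_iff_exp_eq L).1 ⟨hjet.1, hjet.2.1⟩
    exact mem_criticalN_of_isCharTriple hL hr e₁₂ e₂₃
  · intro hmem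
    obtain ⟨r₁, r₂, r₃, hr, he⟩ := exists_isCharTriple_of_mem_criticalN hL hmem
    obtain ⟨hL₀, hL₁⟩ := (hr.distinctRootSol_eq_zero_iff_exp_eq L).2 he
    have h₀ := jet_distinctRootSol_zero r₁ r₂ r₃
    simp only [jet, Prod.mk.injEq] at h₀
    exact ⟨_, _, hr.kdvSpectralODE L, h₀.1, h₀.2.1, hL₀,
      (hasDerivAt_distinctRootSol r₁ r₂ r₃ 0 L).deriv.trans hL₁,
      hr.exists_distinctRootSol_ne_zero hL⟩

theorem hasGlassGuerreroEigenfunction_iff {L : ℝ} (hL : 0 < L) :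
    HasGlassGuerreroEigenfunction L ↔ L ∈ criticalNStar := by
  constructor
  · rintro ⟨lam, φ, hφ, h₀, h₁, hL₀, hL₂, hne⟩
    obtain ⟨r₁, r₂, r₃, hr, c, hc, hjet⟩ := hφ.exists_isCharTriple hL h₀ h₁ hL₀ hne
    rw [jet_of_hasDerivAt (hasDerivAt_distinctRootSol r₁ r₂ r₃), jet, hL₀, hL₂] at hjet
    simp only [Prod.smul_mk, smul_eq_mul, Prod.mk.injEq, zero_eq_mul, hc, false_or] at hjet
    obtain ⟨w, e₁, e₂, e₃⟩ := (hr.distinctRootSol_eq_zero_iff_exp_eq_mul L).1 ⟨hjet.1, hjet.2.2⟩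
    exact mem_criticalNStar_of_isCharTriple hL hr e₁ e₂ e₃
  · intro hmem
    obtain ⟨r₁, r₂, r₃, hr, he⟩ := exists_isCharTriple_of_mem_criticalNStar hL hmem
    obtain ⟨hL₀, hL₂⟩ := (hr.distinctRootSol_eq_zero_iff_exp_eq_mul L).2 he
    have h₀ := jet_distinctRootSol_zero r₁ r₂ r₃
    simp only [jet, Prod.mk.injEq] at h₀
    refine ⟨_, _, hr.kdvSpectralODE L, h₀.1, h₀.2.1, hL₀, ?_,
      hr.exists_distinctRootSol_ne_zero hL⟩
    rwa [iteratedDeriv_eq_of_hasDerivAt (hasDerivAt_distinctRootSol r₁ r₂ r₃)]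

/-! ### The star network -/

/-- The Lagrange form pairing `ψ` with the reflection `x ↦ χ (L - x)`, which solves the adjoint
equation when `χ` solves the spectral equation. -/
def lagrangeForm (L : ℝ) (ψ χ : ℝ → ℂ) (x : ℝ) : ℂ :=
  iteratedDeriv 2 ψ x * χ (L - x) + deriv ψ x * deriv χ (L - x) +
    ψ x * iteratedDeriv 2 χ (L - x) + ψ x * χ (L - x)

namespace KdVSpectralODE

variable {lam : ℂ} {L : ℝ} {ψ χ : ℝ → ℂ}

lemma hasDerivAt_lagrangeForm (hψ : KdVSpectralODE lam L ψ) (hχ : KdVSpectralODE lam L χ)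
    {x : ℝ} (hx : x ∈ Icc 0 L) : HasDerivAt (lagrangeForm L ψ χ) 0 x := by
  have hψ₀ := hasDerivAt_iteratedDeriv hψ.1 (m := 0) (by norm_num) x
  have hψ₁ := hasDerivAt_iteratedDeriv hψ.1 (m := 1) (by norm_num) x
  have hψ₂ := hasDerivAt_iteratedDeriv hψ.1 (m := 2) (by norm_num) x
  have hχ₀ := (hasDerivAt_iteratedDeriv hχ.1 (m := 0) (by norm_num) (L - x)).comp_const_sub L x
  have hχ₁ := (hasDerivAt_iteratedDeriv hχ.1 (m := 1) (by norm_num) (L - x)).comp_const_sub L x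
  have hχ₂ := (hasDerivAt_iteratedDeriv hχ.1 (m := 2) (by norm_num) (L - x)).comp_const_sub L x
  simp only [iteratedDeriv_zero, iteratedDeriv_one, zero_add] at hψ₀ hψ₁ hχ₀ hχ₁
  refine ((((hψ₂.mul hχ₀).add (hψ₁.mul hχ₁)).add (hψ₀.mul hχ₂)).add
    (hψ₀.mul hχ₀)).congr_deriv ?_
  have hψx := hψ.2 x hx
  have hχx := hχ.2 (L - x) ⟨by linarith [hx.2], by linarith [hx.1]⟩
  linear_combination χ (L - x) * hψx - ψ x * hχx

lemma lagrangeForm_eq (hψ : KdVSpectralODE lam L ψ) (hχ : KdVSpectralODE lam L χ) (hL : 0 ≤ L) :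
    lagrangeForm L ψ χ L = lagrangeForm L ψ χ 0 :=
  constant_of_has_deriv_right_zero
    (fun _ hx => (hψ.hasDerivAt_lagrangeForm hχ hx).continuousAt.continuousWithinAt)
    (fun _ hx => (hψ.hasDerivAt_lagrangeForm hχ (Ico_subset_Icc_self hx)).hasDerivWithinAt)
    L (right_mem_Icc.2 hL)

lemma apply_zero_mul_apply_zero_eq_zero (hψ : KdVSpectralODE lam L ψ)
    (hχ : KdVSpectralODE lam L χ) (hL : 0 ≤ L) (hψ₁ : deriv ψ 0 = 0) (hψL : ψ L = 0)
    (hψL₁ : deriv ψ L = 0) (hχL : χ L = 0) (hχL₂ : iteratedDeriv 2 χ L = 0) :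
    ψ 0 * χ 0 = 0 := by
  have h := hψ.lagrangeForm_eq hχ hL
  simp only [lagrangeForm, sub_self, sub_zero, hψ₁, hψL, hψL₁, hχL, hχL₂, mul_zero, zero_mul,
    add_zero] at h
  rcases mul_eq_zero.1 h with hψL₂ | hχ₀
  · have hjet := hψ.eqOn_jet zero (right_mem_Icc.2 hL) (by simp [jet, hψL, hψL₁, hψL₂])
      (left_mem_Icc.2 hL)
    simp [jet] at hjet
    simp [hjet.1]
  · simp [hχ₀]

end KdVSpectralODE

/-- The spectral problem on a star network of `N` edges of length `L`, joined at `x = 0`. -/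
def HasNetworkEigenfunction (N m : ℕ) (hN : 0 < N) (L : ℝ) : Prop :=
  ∃ lam : ℂ, ∃ φ : Fin N → ℝ → ℂ,
    (∀ j, KdVSpectralODE lam L (φ j)) ∧
    (∀ j, φ j 0 = φ ⟨0, hN⟩ 0) ∧
    (∑ j, iteratedDeriv 2 (φ j) 0) = 0 ∧
    (∀ j, φ j L = 0) ∧
    (∀ j, deriv (φ j) 0 = 0) ∧
    (∀ j : Fin N, (j : ℕ) < m → deriv (φ j) L = 0) ∧
    (∀ j : Fin N, m ≤ (j : ℕ) → iteratedDeriv 2 (φ j) L = 0) ∧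
    (∃ j, ∃ x ∈ Icc (0 : ℝ) L, φ j x ≠ 0)

lemma hasNetworkEigenfunction_of_smul {N m : ℕ} (hN : 0 < N) {lam : ℂ} {L : ℝ} {ψ : ℝ → ℂ}
    (hψ : KdVSpectralODE lam L ψ) (h₀ : ψ 0 = 0) (h₁ : deriv ψ 0 = 0) (hL₀ : ψ L = 0)
    (hne : ∃ x ∈ Icc 0 L, ψ x ≠ 0) {c : Fin N → ℂ} (hc : ∑ j, c j = 0) (hc₀ : c ≠ 0)
    (hA : ∀ j : Fin N, (j : ℕ) < m → c j * deriv ψ L = 0)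
    (hB : ∀ j : Fin N, m ≤ (j : ℕ) → c j * iteratedDeriv 2 ψ L = 0) :
    HasNetworkEigenfunction N m hN L := by
  obtain ⟨x, hx, hψx⟩ := hne
  obtain ⟨j, hj⟩ := Function.ne_iff.1 hc₀
  refine ⟨lam, fun j x => c j * ψ x, fun j => hψ.const_mul (c j), fun j => by simp [h₀], ?_,
    fun j => by simp [hL₀], fun j => by simp [deriv_const_mul_field, h₁],
    fun j hj => by simpa [deriv_const_mul_field] using hA j hj,
    fun j hj => by simpa using hB j hj, j, x, hx, mul_ne_zero hj hψx⟩
  simp only [iteratedDeriv_const_mul_field, ← Finset.sum_mul, hc, zero_mul]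

lemma exists_sum_eq_zero_of_ne {N : ℕ} {j₀ j₁ : Fin N} (h : j₀ ≠ j₁) : ∃ c : Fin N → ℂ,
    ∑ j, c j = 0 ∧ c ≠ 0 ∧ ∀ j, j ≠ j₀ → j ≠ j₁ → c j = 0 := by
  refine ⟨Pi.single j₀ 1 - Pi.single j₁ 1, by simp [Finset.sum_sub_distrib], fun hc => ?_,
    fun j h₀ h₁ => by simp [h₀, h₁]⟩
  simpa [h.symm] using congrFun hc j₀

theorem hasNetworkEigenfunction_iff {N m : ℕ} (hm₁ : 1 < m) (hm₂ : m + 1 < N) {L : ℝ}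
    (hL : 0 < L) : HasNetworkEigenfunction N m (by omega) L ↔
      HasRosierEigenfunction L ∨ HasGlassGuerreroEigenfunction L := by
  constructor
  · rintro ⟨lam, φ, hφ, h₀, -, hL₀, h₁, hA, hB, j, x, hx, hne⟩
    have hv : φ ⟨0, by omega⟩ 0 = 0 := by
      have := (hφ ⟨0, by omega⟩).apply_zero_mul_apply_zero_eq_zero (hφ ⟨N - 1, by omega⟩) hL.le
        (h₁ _) (hL₀ _) (hA _ (by simp; omega)) (hL₀ _) (hB _ (by simp; omega))
      rwa [h₀ ⟨N - 1, by omega⟩, mul_self_eq_zero] at this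
    rcases lt_or_ge (j : ℕ) m with hj | hj
    · exact .inl ⟨lam, φ j, hφ j, (h₀ j).trans hv, h₁ j, hL₀ j, hA j hj, x, hx, hne⟩
    · exact .inr ⟨lam, φ j, hφ j, (h₀ j).trans hv, h₁ j, hL₀ j, hB j hj, x, hx, hne⟩
  · rintro (⟨lam, ψ, hψ, h₀, h₁, hL₀, hL₁, hne⟩ | ⟨lam, ψ, hψ, h₀, h₁, hL₀, hL₂, hne⟩)
    · obtain ⟨c, hc, hc₀, hsupp⟩ := exists_sum_eq_zero_of_ne (N := N) (j₀ := ⟨0, by omega⟩)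
        (j₁ := ⟨1, by omega⟩) (by simp)
      refine hasNetworkEigenfunction_of_smul _ hψ h₀ h₁ hL₀ hne hc hc₀ (fun j _ => by simp [hL₁])
        fun j hj => ?_
      rw [hsupp j (by simp [Fin.ext_iff]; omega) (by simp [Fin.ext_iff]; omega), zero_mul]
    · obtain ⟨c, hc, hc₀, hsupp⟩ := exists_sum_eq_zero_of_ne (N := N) (j₀ := ⟨m, by omega⟩)
        (j₁ := ⟨m + 1, by omega⟩) (by simp)
      refine hasNetworkEigenfunction_of_smul _ hψ h₀ h₁ hL₀ hne hc hc₀ (fun j hj => ?_)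
        fun j _ => by simp [hL₂]
      rw [hsupp j (by simp [Fin.ext_iff]; omega) (by simp [Fin.ext_iff]; omega), zero_mul]

theorem stmt7 (N m : ℕ) (hN : 3 < N) (hm1 : 1 < m) (hm2 : m < N - 1)
    (L : ℝ) (hL : 0 < L) :
    (∃ lam : ℂ, ∃ φ : Fin N → ℝ → ℂ,
      (∀ j, KdVSpectralODE lam L (φ j)) ∧
      (∀ j, φ j 0 = φ ⟨0, by omega⟩ 0) ∧
      (∑ j, iteratedDeriv 2 (φ j) 0) = 0 ∧
      (∀ j, φ j L = 0) ∧
      (∀ j, deriv (φ j) 0 = 0) ∧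
      (∀ j : Fin N, (j : ℕ) < m → deriv (φ j) L = 0) ∧
      (∀ j : Fin N, m ≤ (j : ℕ) → iteratedDeriv 2 (φ j) L = 0) ∧
      (∃ j, ∃ x ∈ Set.Icc (0 : ℝ) L, φ j x ≠ 0)) ↔
    L ∈ criticalN ∪ criticalNStar := by
  change HasNetworkEigenfunction N m _ L ↔ _
  rw [hasNetworkEigenfunction_iff hm1 (by omega) hL, hasRosierEigenfunction_iff hL,
    hasGlassGuerreroEigenfunction_iff hL, mem_union]

end
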